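/- arXiv:2011.14622 — 2 statements merged into one kernel-verified Lean document; each statement's English description precedes it below -/
import Mathlib

section
/- Let Φ_1, …, Φ_n be unit vectors in ℂ^{d₁} and Ψ_1, …, Ψ_n be unit vectors in ℂ^{d₄} (neither family need be orthogonal), and let ν_1, …, ν_n > 0 with Σ_j ν_j² = 1. Let ρ₁₄ = Σ_j ν_j² (Φ_j Φ_j*) ⊗ (Ψ_j Ψ_j*) be the corresponding separable density matrix on ℂ^{d₁} ⊗ ℂ^{d₄}. Then there exist natural numbers d₂, d₃ and a unit vector Ω in ℂ^{d₁} ⊗ ℂ^{d₂} ⊗ ℂ^{d₃} ⊗ ℂ^{d₄} such that the reduced density matrix of |Ω⟩⟨Ω| on the factors (1,4) equals ρ₁₄ and the reduced density matrix ρ₁₂ on the factors (1,2) satisfies S(ρ₁₂) ≤ −4 Σ_j ν_j² log ν_j (natural logarithm). -/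
/-!
Take `d₂ = d₃ = n` and `Ω = ∑ⱼ νⱼ Φⱼ ⊗ eⱼ ⊗ eⱼ ⊗ Ψⱼ`. Tracing out the two copies of `eⱼ`
recovers the separable state, while tracing out factors 3 and 4 leaves the block-diagonal
matrix `ρ₁₂ = ⊕ⱼ νⱼ² |Φⱼ⟩⟨Φⱼ|`. Conjugating each block by a unitary having `Φⱼ` as a column
diagonalises it, so the spectrum of `ρ₁₂` is `{νⱼ²}` padded with zeros, and
`S(ρ₁₂) = -∑ νⱼ² log νⱼ² = -2 ∑ νⱼ² log νⱼ`, which is nonnegative and hence at most twice itself.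
-/

open scoped BigOperators

/-- Von Neumann entropy of a (Hermitian) matrix: `-∑ λᵢ log λᵢ` over the eigenvalues,
with the convention that it is `0` for non-Hermitian matrices. -/
noncomputable def vNEntropy {n : Type*} [Fintype n] [DecidableEq n] (ρ : Matrix n n ℂ) : ℝ :=
  if h : ρ.IsHermitian then -∑ i, h.eigenvalues i * Real.log (h.eigenvalues i) else 0

open Matrix Polynomial

theorem Matrix.mul_diagonal_single_mul_conjTranspose {m n : Type*} [Fintype n] [DecidableEq n]
    (U : Matrix m n ℂ) (j : n) (c : ℝ) :
    U * diagonal (fun k => ((Pi.single j c : n → ℝ) k : ℂ)) * Uᴴ =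
      (c : ℂ) • vecMulVec (fun i => U i j) (star fun i => U i j) := by
  ext i i'
  simp only [diagonal, Pi.single_apply, apply_ite Complex.ofReal, Complex.ofReal_zero, mul_apply,
    of_apply, mul_ite, mul_zero, Finset.sum_ite_eq', Finset.mem_univ, ↓reduceIte,
    conjTranspose_apply, RCLike.star_def, ite_mul, zero_mul, smul_apply, vecMulVec_apply,
    Pi.star_apply, smul_eq_mul]
  ring

section Spectrum

variable {m : Type*} [Fintype m] [DecidableEq m]

theorem vNEntropy_eq_sum_negMulLog {ρ : Matrix m m ℂ} (hρ : ρ.IsHermitian) :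
    vNEntropy ρ = ∑ i, Real.negMulLog (hρ.eigenvalues i) := by
  simp [vNEntropy, dif_pos hρ, Real.negMulLog, Finset.sum_neg_distrib]

theorem Matrix.IsHermitian.eigenvalues_map_eq_of_eq_unitary_conj {A U : Matrix m m ℂ}
    (hA : A.IsHermitian) (hU : Uᴴ * U = 1) {d : m → ℝ}
    (hAU : A = U * diagonal (fun i => (d i : ℂ)) * Uᴴ) :
    Finset.univ.val.map hA.eigenvalues = Finset.univ.val.map d := by
  have hcharpoly : A.charpoly = ∏ i, (X - C (d i : ℂ)) := by
    rw [hAU, charpoly_mul_comm, ← mul_assoc, hU, one_mul, charpoly_diagonal]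
  have hroots := hA.roots_charpoly_eq_eigenvalues
  rw [hcharpoly, roots_prod _ _ (by simp [Finset.prod_ne_zero_iff, X_sub_C_ne_zero])] at hroots
  simpa [Multiset.map_map] using (congrArg (Multiset.map Complex.re) hroots).symm

theorem vNEntropy_unitary_conj_diagonal {U : Matrix m m ℂ} (hU : Uᴴ * U = 1) (d : m → ℝ) :
    vNEntropy (U * diagonal (fun i => (d i : ℂ)) * Uᴴ) = ∑ i, Real.negMulLog (d i) := by
  have hA : (U * diagonal (fun i => (d i : ℂ)) * Uᴴ).IsHermitian :=
    isHermitian_mul_mul_conjTranspose U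
      (isHermitian_diagonal_iff.mpr fun i => by simp [IsSelfAdjoint])
  rw [vNEntropy_eq_sum_negMulLog hA, Finset.sum_eq_multiset_sum, Finset.sum_eq_multiset_sum]
  have h := congrArg (fun s => (s.map Real.negMulLog).sum)
    (hA.eigenvalues_map_eq_of_eq_unitary_conj hU rfl)
  simpa only [Multiset.map_map, Function.comp_def] using h

theorem exists_mem_unitaryGroup_col_eq {v : m → ℂ} (hv : ∑ i, ‖v i‖ ^ 2 = 1) :
    ∃ U ∈ unitaryGroup m ℂ, ∃ j, ∀ i, U i j = v i := by
  obtain ⟨j⟩ : Nonempty m := by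
    by_contra h
    simp [not_nonempty_iff.mp h] at hv
  have hw : ‖WithLp.toLp 2 v‖ = 1 := by
    rw [EuclideanSpace.norm_eq]; simp [hv]
  have horth : Orthonormal ℂ (({j} : Set m).domRestrict fun _ => WithLp.toLp 2 v) :=
    ⟨fun _ => hw, fun p q hpq => absurd (Subtype.ext (p.2.trans q.2.symm)) hpq⟩
  obtain ⟨b, hb⟩ := horth.exists_orthonormalBasis_extension_of_card_eq (by simp)
  refine ⟨(EuclideanSpace.basisFun m ℂ).toBasis.toMatrix b,
    (EuclideanSpace.basisFun m ℂ).toMatrix_orthonormalBasis_mem_unitary b, j, fun i => ?_⟩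
  simp [Module.Basis.toMatrix_apply, hb j rfl]

theorem vNEntropy_blockDiagonal_smul_vecMulVec {ι : Type*} [Fintype ι] [DecidableEq ι]
    (c : ι → ℝ) {v : ι → m → ℂ} (hv : ∀ a, ∑ i, ‖v a i‖ ^ 2 = 1) :
    vNEntropy (blockDiagonal fun a => (c a : ℂ) • vecMulVec (v a) (star (v a))) =
      ∑ a, Real.negMulLog (c a) := by
  choose U hU j hUj using fun a => exists_mem_unitaryGroup_col_eq (hv a)
  have hW : (blockDiagonal U)ᴴ * blockDiagonal U = 1 := by
    have hblocks : (fun a => (U a)ᴴ * U a) = 1 :=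
      funext fun a => mem_unitaryGroup_iff'.mp (hU a)
    rw [blockDiagonal_conjTranspose, ← blockDiagonal_mul, hblocks, blockDiagonal_one]
  have hconj : (blockDiagonal fun a => (c a : ℂ) • vecMulVec (v a) (star (v a))) =
      blockDiagonal U * diagonal (fun p => ((Pi.single (j p.2) (c p.2) : m → ℝ) p.1 : ℂ)) *
        (blockDiagonal U)ᴴ := by
    rw [← blockDiagonal_diagonal (fun a i => ((Pi.single (j a) (c a) : m → ℝ) i : ℂ)),
      blockDiagonal_conjTranspose, ← blockDiagonal_mul, ← blockDiagonal_mul]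
    simp only [mul_diagonal_single_mul_conjTranspose, hUj]
  rw [hconj, vNEntropy_unitary_conj_diagonal hW, Fintype.sum_prod_type_right]
  refine Finset.sum_congr rfl fun a _ => (Fintype.sum_eq_single (j a) fun i hi => ?_).trans ?_
  · simp [Pi.single_eq_of_ne hi]
  · simp

end Spectrum

theorem Complex.sum_mul_star_eq_one {m : Type*} [Fintype m] {v : m → ℂ}
    (hv : ∑ i, ‖v i‖ ^ 2 = 1) : ∑ i, v i * star (v i) = 1 := by
  simp_rw [Complex.star_def, Complex.mul_conj', ← Complex.ofReal_pow, ← Complex.ofReal_sum, hv,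
    Complex.ofReal_one]

section Purification

variable {α ι β : Type*} [DecidableEq ι]

def diagonalPurification (ν : ι → ℝ) (Φ : ι → α → ℂ) (Ψ : ι → β → ℂ) : α × ι × ι × β → ℂ
  | (i, a, b, k) => if a = b then ν a * Φ a i * Ψ a k else 0

variable (ν : ι → ℝ) (Φ : ι → α → ℂ) (Ψ : ι → β → ℂ)

@[simp]
theorem diagonalPurification_apply (i : α) (a b : ι) (k : β) :
    diagonalPurification ν Φ Ψ (i, a, b, k) = if a = b then ν a * Φ a i * Ψ a k else 0 :=
  rfl

variable [Fintype ι]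

theorem diagonalPurification_reduced₁₄ (i i' : α) (k k' : β) :
    ∑ a, ∑ b, diagonalPurification ν Φ Ψ (i, a, b, k) *
        star (diagonalPurification ν Φ Ψ (i', a, b, k')) =
      ∑ a, (ν a : ℂ) ^ 2 * (Φ a i * star (Φ a i')) * (Ψ a k * star (Ψ a k')) := by
  refine Finset.sum_congr rfl fun a _ => ?_
  simp only [diagonalPurification_apply, apply_ite star, star_mul', RCLike.star_def,
    Complex.conj_ofReal, star_zero, mul_ite, ite_mul, zero_mul, mul_zero, Finset.sum_ite_eq,
    Finset.mem_univ, ↓reduceIte]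
  ring

variable [Fintype β]

theorem diagonalPurification_reduced₁₂ (hΨ : ∀ a, ∑ k, ‖Ψ a k‖ ^ 2 = 1) :
    (Matrix.of fun (p q : α × ι) => ∑ b, ∑ k,
      diagonalPurification ν Φ Ψ (p.1, p.2, b, k) *
        star (diagonalPurification ν Φ Ψ (q.1, q.2, b, k))) =
      blockDiagonal fun a => ((ν a ^ 2 : ℝ) : ℂ) • vecMulVec (Φ a) (star (Φ a)) := by
  ext ⟨i, a⟩ ⟨i', a'⟩
  obtain rfl | h := eq_or_ne a a'
  · calc _ = ∑ k, (ν a : ℂ) ^ 2 * (Φ a i * star (Φ a i')) * (Ψ a k * star (Ψ a k)) := by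
          simp only [of_apply, diagonalPurification_apply, RCLike.star_def, ite_mul, zero_mul,
            Finset.sum_ite_irrel, Finset.sum_const_zero, Finset.sum_ite_eq, Finset.mem_univ,
            ↓reduceIte, map_mul, Complex.conj_ofReal]
          exact Finset.sum_congr rfl fun k _ => by ring
      _ = _ := by
          rw [← Finset.mul_sum, Complex.sum_mul_star_eq_one (hΨ a)]
          simp [vecMulVec_apply]
  · simp [blockDiagonal_apply, h, h.symm]

variable [Fintype α]

theorem sum_norm_sq_diagonalPurification (hΦ : ∀ a, ∑ i, ‖Φ a i‖ ^ 2 = 1)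
    (hΨ : ∀ a, ∑ k, ‖Ψ a k‖ ^ 2 = 1) :
    ∑ p, ‖diagonalPurification ν Φ Ψ p‖ ^ 2 = ∑ a, ν a ^ 2 := by
  simp only [Fintype.sum_prod_type, diagonalPurification_apply, apply_ite (‖·‖ ^ 2),
    Complex.norm_mul, Complex.norm_real, Real.norm_eq_abs, mul_pow, sq_abs, norm_zero, ne_eq,
    OfNat.ofNat_ne_zero, not_false_eq_true, zero_pow, Finset.sum_ite_irrel, ← Finset.mul_sum, hΨ,
    mul_one, Finset.sum_const_zero, Finset.sum_ite_eq, Finset.mem_univ, ↓reduceIte]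
  rw [Finset.sum_comm]
  simp [← Finset.mul_sum, hΦ]

end Purification

theorem separable_state_purification_entropy_bound_general
    {d₁ d₄ n : ℕ} (Φ : Fin n → Fin d₁ → ℂ) (Ψ : Fin n → Fin d₄ → ℂ)
    (hΦ : ∀ j, ∑ i, ‖Φ j i‖ ^ 2 = 1) (hΨ : ∀ j, ∑ k, ‖Ψ j k‖ ^ 2 = 1)
    (ν : Fin n → ℝ) (hνsum : ∑ j, ν j ^ 2 = 1) :
    ∃ (d₂ d₃ : ℕ) (Ω : Fin d₁ × Fin d₂ × Fin d₃ × Fin d₄ → ℂ),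
      (∑ p, ‖Ω p‖ ^ 2 = 1) ∧
      (∀ i i' k k',
        (∑ a : Fin d₂, ∑ b : Fin d₃, Ω (i, a, b, k) * star (Ω (i', a, b, k'))) =
          ∑ j, ((ν j : ℂ) ^ 2) * (Φ j i * star (Φ j i')) * (Ψ j k * star (Ψ j k'))) ∧
      vNEntropy (Matrix.of fun (p q : Fin d₁ × Fin d₂) =>
          ∑ b : Fin d₃, ∑ k : Fin d₄, Ω (p.1, p.2, b, k) * star (Ω (q.1, q.2, b, k))) ≤
        -4 * ∑ j, ν j ^ 2 * Real.log (ν j) := by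
  refine ⟨n, n, diagonalPurification ν Φ Ψ,
    by rw [sum_norm_sq_diagonalPurification ν Φ Ψ hΦ hΨ, hνsum],
    diagonalPurification_reduced₁₄ ν Φ Ψ, ?_⟩
  rw [diagonalPurification_reduced₁₂ ν Φ Ψ hΨ, vNEntropy_blockDiagonal_smul_vecMulVec _ hΦ]
  have hweight_le_one : ∀ j, ν j ^ 2 ≤ 1 := fun j =>
    hνsum ▸ Finset.single_le_sum (fun i _ => sq_nonneg (ν i)) (Finset.mem_univ j)
  have hentropy_nonneg : 0 ≤ ∑ j, Real.negMulLog (ν j ^ 2) :=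
    Finset.sum_nonneg fun j _ => Real.negMulLog_nonneg (sq_nonneg _) (hweight_le_one j)
  have hbound_eq : -4 * ∑ j, ν j ^ 2 * Real.log (ν j) = 2 * ∑ j, Real.negMulLog (ν j ^ 2) := by
    simp only [Real.negMulLog, Real.log_pow, Finset.mul_sum]
    exact Finset.sum_congr rfl fun j _ => by push_cast; ring
  linarith

/-- Given unit vectors `Φ j ∈ ℂ^{d₁}`, `Ψ j ∈ ℂ^{d₄}` and weights `ν j > 0`
with `∑ νⱼ² = 1`, there are `d₂ d₃` and a unit vector `Ω ∈ ℂ^{d₁}⊗ℂ^{d₂}⊗ℂ^{d₃}⊗ℂ^{d₄}`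
whose reduced density matrix on the factors (1,4) is the separable state
`∑ νⱼ² |Φⱼ⟩⟨Φⱼ| ⊗ |Ψⱼ⟩⟨Ψⱼ|`, and whose reduced density matrix on the factors (1,2)
has entropy at most `-4 ∑ νⱼ² log νⱼ`. -/
theorem separable_state_purification_entropy_bound
    {d₁ d₄ n : ℕ} (Φ : Fin n → Fin d₁ → ℂ) (Ψ : Fin n → Fin d₄ → ℂ)
    (hΦ : ∀ j, ∑ i, ‖Φ j i‖ ^ 2 = 1) (hΨ : ∀ j, ∑ k, ‖Ψ j k‖ ^ 2 = 1)
    (ν : Fin n → ℝ) (hν : ∀ j, 0 < ν j) (hνsum : ∑ j, ν j ^ 2 = 1) :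
    ∃ (d₂ d₃ : ℕ) (Ω : Fin d₁ × Fin d₂ × Fin d₃ × Fin d₄ → ℂ),
      (∑ p, ‖Ω p‖ ^ 2 = 1) ∧
      (∀ i i' k k',
        (∑ a : Fin d₂, ∑ b : Fin d₃, Ω (i, a, b, k) * star (Ω (i', a, b, k'))) =
          ∑ j, ((ν j : ℂ) ^ 2) * (Φ j i * star (Φ j i')) * (Ψ j k * star (Ψ j k'))) ∧
      vNEntropy (Matrix.of fun (p q : Fin d₁ × Fin d₂) =>
          ∑ b : Fin d₃, ∑ k : Fin d₄, Ω (p.1, p.2, b, k) * star (Ω (q.1, q.2, b, k))) ≤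
        -4 * ∑ j, ν j ^ 2 * Real.log (ν j) :=
  separable_state_purification_entropy_bound_general Φ Ψ hΦ hΨ ν hνsum
end

section
/- Let G be an n×n positive semidefinite Hermitian complex matrix with unit diagonal, G_{ii} = 1 for all i, and let N be the real diagonal n×n matrix with nonnegative diagonal entries ν_1, …, ν_n satisfying Σ_i ν_i² = 1. Then N G N is a density matrix and S(N G N) ≤ S(N²) = −Σ_i ν_i² log ν_i². -/
open scoped BigOperators ComplexOrder

/-- A density matrix: positive semidefinite with trace 1. -/
def IsDensityMatrix {n : Type*} [Fintype n] [DecidableEq n] (ρ : Matrix n n ℂ) : Prop :=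
  ρ.PosSemidef ∧ ρ.trace = 1

/-!
The diagonal of a Hermitian matrix `A = U diag(λ) U*` is `B λ`, where `B = (|U i j|²)` is
doubly stochastic. Jensen's inequality for the concave function `-x log x`, applied row by row
and summed, gives Schur concavity of the entropy: `S(A) ≤ -∑ aᵢᵢ log aᵢᵢ`. For `ρ = N G N` the
diagonal is `νᵢ² Gᵢᵢ = νᵢ²`, while for the diagonal matrix `N²` the bound is an equality,
its eigenvalues being its diagonal entries (both are the roots of its characteristic polynomial).
-/

open Matrix

theorem ConcaveOn.sum_le_sum_comp_mulVec_of_mem_doublyStochastic {ι : Type*} [Fintype ι]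
    [DecidableEq ι] {s : Set ℝ} {f : ℝ → ℝ} (hf : ConcaveOn ℝ s f) {M : Matrix ι ι ℝ}
    (hM : M ∈ doublyStochastic ℝ ι) {x : ι → ℝ} (hx : ∀ j, x j ∈ s) :
    ∑ j, f (x j) ≤ ∑ i, f ((M *ᵥ x) i) := by
  have jensen (i : ι) : ∑ j, M i j * f (x j) ≤ f ((M *ᵥ x) i) := by
    simpa [mulVec, dotProduct] using hf.le_map_sum (t := Finset.univ) (w := M i) (p := x)
      (fun j _ => nonneg_of_mem_doublyStochastic hM) (sum_row_of_mem_doublyStochastic hM i)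
      (fun j _ => hx j)
  calc ∑ j, f (x j) = ∑ j, (∑ i, M i j) * f (x j) := by
        simp only [sum_col_of_mem_doublyStochastic hM, one_mul]
    _ = ∑ i, ∑ j, M i j * f (x j) := by
        simp only [Finset.sum_mul]; exact Finset.sum_comm
    _ ≤ ∑ i, f ((M *ᵥ x) i) := Finset.sum_le_sum fun i _ => jensen i

namespace Matrix

variable {𝕜 n : Type*} [RCLike 𝕜] [Fintype n] [DecidableEq n]

theorem map_norm_sq_mem_doublyStochastic {U : Matrix n n 𝕜} (hU : U ∈ unitaryGroup n 𝕜) :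
    U.map (‖·‖ ^ 2) ∈ doublyStochastic ℝ n := by
  have row (i : n) : ∑ j, ‖U i j‖ ^ 2 = 1 := by
    have := congr_fun₂ (mem_unitaryGroup_iff.mp hU) i i
    simp only [mul_apply, star_apply, one_apply_eq, RCLike.star_def, RCLike.mul_conj] at this
    exact_mod_cast this
  have col (j : n) : ∑ i, ‖U i j‖ ^ 2 = 1 := by
    have := congr_fun₂ (mem_unitaryGroup_iff'.mp hU) j j
    simp only [mul_apply, star_apply, one_apply_eq, RCLike.star_def, RCLike.conj_mul] at this
    exact_mod_cast this
  exact mem_doublyStochastic_iff_sum.mpr ⟨fun _ _ => sq_nonneg _, row, col⟩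

namespace IsHermitian

variable {A : Matrix n n 𝕜} (hA : A.IsHermitian)
include hA

theorem diag_eq_mulVec_eigenvalues (i : n) :
    A i i = ((hA.eigenvectorUnitary : Matrix n n 𝕜).map (‖·‖ ^ 2) *ᵥ hA.eigenvalues) i := by
  conv_lhs => rw [hA.spectral_theorem, Unitary.conjStarAlgAut_apply]
  simp only [mul_apply, mulVec, dotProduct, diagonal_apply, star_apply, map_apply, mul_ite,
    mul_zero, Finset.sum_ite_eq', Finset.mem_univ, if_true, RCLike.ofReal_sum, RCLike.ofReal_mul,
    RCLike.ofReal_pow, Function.comp_apply, RCLike.star_def]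
  refine Finset.sum_congr rfl fun j _ => ?_
  rw [mul_right_comm, RCLike.mul_conj, mul_comm]

theorem sum_comp_eigenvalues_le_sum_comp_diag {s : Set ℝ} {f : ℝ → ℝ} (hf : ConcaveOn ℝ s f)
    (hs : ∀ j, hA.eigenvalues j ∈ s) :
    ∑ j, f (hA.eigenvalues j) ≤ ∑ i, f (RCLike.re (A i i)) := by
  simpa only [hA.diag_eq_mulVec_eigenvalues, RCLike.ofReal_re] using
    hf.sum_le_sum_comp_mulVec_of_mem_doublyStochastic
      (map_norm_sq_mem_doublyStochastic hA.eigenvectorUnitary.2) hs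

theorem sum_comp_eigenvalues_eq_sum_comp_diag_of_isDiag (hA_diag : A.IsDiag) (f : ℝ → ℝ) :
    ∑ i, f (hA.eigenvalues i) = ∑ i, f (RCLike.re (A i i)) := by
  have roots : Multiset.map (RCLike.ofReal ∘ hA.eigenvalues) Finset.univ.val =
      Multiset.map (fun i => A i i) Finset.univ.val := by
    rw [← hA.roots_charpoly_eq_eigenvalues, ← hA_diag.diagonal_diag, charpoly_diagonal,
      Polynomial.roots_prod]
    · simp
    · simp [Finset.prod_ne_zero_iff, Polynomial.X_sub_C_ne_zero]
  have := congr_arg (fun s => (s.map (f ∘ RCLike.re)).sum) roots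
  simp only [Multiset.map_map, Function.comp_def, RCLike.ofReal_re] at this
  simpa only [Finset.sum_eq_multiset_sum] using this

end IsHermitian

end Matrix

theorem vNEntropy_eq_sum_negMulLog_s6 {n : Type*} [Fintype n] [DecidableEq n]
    {ρ : Matrix n n ℂ} (h : ρ.IsHermitian) :
    vNEntropy ρ = ∑ j, Real.negMulLog (h.eigenvalues j) := by
  simp only [vNEntropy, dif_pos h, Real.negMulLog, neg_mul, Finset.sum_neg_distrib]

theorem entropy_NGN_le_entropy_N_sq_general {n : ℕ}
    (G : Matrix (Fin n) (Fin n) ℂ) (hG : G.PosSemidef) (hGdiag : ∀ i, G i i = 1)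
    (ν : Fin n → ℝ) (hνsum : ∑ i, ν i ^ 2 = 1) :
    IsDensityMatrix
        (Matrix.diagonal (fun i => (ν i : ℂ)) * G * Matrix.diagonal (fun i => (ν i : ℂ))) ∧
      vNEntropy
          (Matrix.diagonal (fun i => (ν i : ℂ)) * G * Matrix.diagonal (fun i => (ν i : ℂ))) ≤
        vNEntropy
          (Matrix.diagonal (fun i => (ν i : ℂ)) * Matrix.diagonal (fun i => (ν i : ℂ))) ∧
      vNEntropy
          (Matrix.diagonal (fun i => (ν i : ℂ)) * Matrix.diagonal (fun i => (ν i : ℂ))) =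
        -∑ i, ν i ^ 2 * Real.log (ν i ^ 2) := by
  set N : Matrix (Fin n) (Fin n) ℂ := diagonal fun i => (ν i : ℂ)
  have hN : Nᴴ = N := by simp [N, diagonal_conjTranspose, Pi.star_def]
  have hρ : (N * G * N).PosSemidef := by simpa [hN] using hG.mul_mul_conjTranspose_same N
  have hρ_diag (i : Fin n) : (N * G * N) i i = ((ν i ^ 2 : ℝ) : ℂ) := by
    simp only [N, mul_diagonal, diagonal_mul, hGdiag, mul_one, Complex.ofReal_pow]; ring
  have hNN : (N * N).IsHermitian := by simpa [hN] using isHermitian_mul_conjTranspose_self N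
  have hNN_diag : (N * N).IsDiag := by rw [diagonal_mul_diagonal]; exact isDiag_diagonal _
  have hS_NN : vNEntropy (N * N) = ∑ i, Real.negMulLog (ν i ^ 2) := by
    rw [vNEntropy_eq_sum_negMulLog_s6 hNN,
      hNN.sum_comp_eigenvalues_eq_sum_comp_diag_of_isDiag hNN_diag]
    simp [N, sq]
  have htrace : (N * G * N).trace = 1 := by
    simp only [trace, diag, hρ_diag, ← Complex.ofReal_sum, hνsum, Complex.ofReal_one]
  refine ⟨⟨hρ, htrace⟩, ?_, ?_⟩
  · rw [vNEntropy_eq_sum_negMulLog_s6 hρ.isHermitian, hS_NN]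
    simpa only [hρ_diag, RCLike.re_to_complex, Complex.ofReal_re] using
      hρ.isHermitian.sum_comp_eigenvalues_le_sum_comp_diag Real.concaveOn_negMulLog
        hρ.eigenvalues_nonneg
  · simp [hS_NN, Real.negMulLog]

/-- If `G` is positive semidefinite with unit diagonal and
`N = diag(ν₁,…,νₙ)` with `νᵢ ≥ 0`, `∑ νᵢ² = 1`, then `N G N` is a density matrix and
`S(N G N) ≤ S(N²) = −∑ νᵢ² log νᵢ²`. -/
theorem entropy_NGN_le_entropy_N_sq {n : ℕ}
    (G : Matrix (Fin n) (Fin n) ℂ) (hG : G.PosSemidef) (hGdiag : ∀ i, G i i = 1)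
    (ν : Fin n → ℝ) (hν : ∀ i, 0 ≤ ν i) (hνsum : ∑ i, ν i ^ 2 = 1) :
    IsDensityMatrix
        (Matrix.diagonal (fun i => (ν i : ℂ)) * G * Matrix.diagonal (fun i => (ν i : ℂ))) ∧
      vNEntropy
          (Matrix.diagonal (fun i => (ν i : ℂ)) * G * Matrix.diagonal (fun i => (ν i : ℂ))) ≤
        vNEntropy
          (Matrix.diagonal (fun i => (ν i : ℂ)) * Matrix.diagonal (fun i => (ν i : ℂ))) ∧
      vNEntropy
          (Matrix.diagonal (fun i => (ν i : ℂ)) * Matrix.diagonal (fun i => (ν i : ℂ))) =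
        -∑ i, ν i ^ 2 * Real.log (ν i ^ 2) :=
  entropy_NGN_le_entropy_N_sq_general G hG hGdiag ν hνsum
end
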